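/- (Equivalence of the recursive and anthyphairetic definitions of the side and diameter numbers.) For every natural number n, the continued fraction expansion of the rational number (q n) / (p n) is [1; 2, 2, ..., 2] with exactly n partial denominators: its integer part is 1, its k-th partial denominator equals 2 for every k < n, and it has no partial denominator of index ≥ n (the expansion terminates after n terms). -/

import Mathlib

mutual
/-- The Pythagorean side numbers. -/
def p : ℕ → ℕ
  | 0 => 1
  | n + 1 => p n + q n
/-- The Pythagorean diameter numbers. -/
def q : ℕ → ℕ
  | 0 => 1
  | n + 1 => 2 * p n + q n
end

/-!
Both `q (n+1) = p (n+1) + p n` and `p (n+2) = 2 * p (n+1) + p n` hold, so with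
`r n = p (n+1) / p n > 1` one gets `q (n+1) / p (n+1) = 1 + 1 / r n` and
`r (n+1) = 2 + 1 / r n`. Prepending `a + 1 / w` to the expansion of `w > 1` prepends the
partial denominator `⌊w⌋`, so `r n = [2; 2, …, 2]` and `q n / p n = [1; 2, …, 2]`, each with
`n` partial denominators.
-/

section

variable {K : Type*} [Field K] [LinearOrder K] [IsStrictOrderedRing K] [FloorRing K] {w : K}

theorem Int.floor_intCast_add_inv (a : ℤ) (hw : 1 < w) : ⌊(a : K) + w⁻¹⌋ = a := by
  rw [Int.floor_intCast_add, add_eq_left, Int.floor_eq_zero_iff]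
  exact ⟨by positivity, inv_lt_one_of_one_lt₀ hw⟩

theorem Int.fract_intCast_add_inv (a : ℤ) (hw : 1 < w) : Int.fract ((a : K) + w⁻¹) = w⁻¹ := by
  rw [Int.fract, Int.floor_intCast_add_inv a hw, add_sub_cancel_left]

theorem GenContFract.of_s_intCast_add_inv (a : ℤ) (hw : 1 < w) :
    (GenContFract.of ((a : K) + w⁻¹)).s = .cons ⟨1, ⌊w⌋⟩ (GenContFract.of w).s := by
  have hfract := Int.fract_intCast_add_inv a hw
  refine Stream'.Seq.ext fun k => ?_
  cases k with
  | zero =>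
    have hhead := GenContFract.of_s_head (v := (a : K) + w⁻¹) (by rw [hfract]; positivity)
    rw [hfract, inv_inv] at hhead
    exact hhead
  | succ k => rw [GenContFract.of_s_succ, hfract, inv_inv, Stream'.Seq.get?_cons_succ]

end

open GenContFract

theorem p_pos (n : ℕ) : 0 < p n := by
  induction n with
  | zero => simp [p]
  | succ n ih => rw [p]; omega

theorem q_pos (n : ℕ) : 0 < q n := by
  cases n with
  | zero => simp [q]
  | succ n => rw [q]; have := p_pos n; omega

theorem one_lt_p_succ_div_p (n : ℕ) : 1 < (p (n + 1) : ℚ) / p n := by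
  rw [one_lt_div (by exact_mod_cast p_pos n), p]
  push_cast
  linarith [(by exact_mod_cast q_pos n : (0 : ℚ) < q n)]

theorem q_succ_div_p_succ (n : ℕ) :
    (q (n + 1) : ℚ) / p (n + 1) = 1 + ((p (n + 1) : ℚ) / p n)⁻¹ := by
  have hp : (p n : ℚ) ≠ 0 := by exact_mod_cast (p_pos n).ne'
  have hp' : (p n + q n : ℚ) ≠ 0 := by exact_mod_cast (p_pos (n + 1)).ne'
  rw [inv_div, q, p]
  push_cast
  field_simp
  ring

theorem p_succ_succ_div_p_succ (n : ℕ) :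
    (p (n + 2) : ℚ) / p (n + 1) = 2 + ((p (n + 1) : ℚ) / p n)⁻¹ := by
  have hp : (p n : ℚ) ≠ 0 := by exact_mod_cast (p_pos n).ne'
  have hp' : (p n + q n : ℚ) ≠ 0 := by exact_mod_cast (p_pos (n + 1)).ne'
  rw [inv_div, p, p, q]
  push_cast
  field_simp
  ring

theorem floor_p_succ_div_p (n : ℕ) : ⌊(p (n + 1) : ℚ) / p n⌋ = 2 := by
  cases n with
  | zero => norm_num [p, q]
  | succ n =>
    rw [p_succ_succ_div_p_succ]
    exact_mod_cast Int.floor_intCast_add_inv 2 (one_lt_p_succ_div_p n)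

theorem of_p_succ_div_p_s (n : ℕ) :
    (GenContFract.of ((p (n + 1) : ℚ) / p n)).s = .ofList (List.replicate n ⟨1, 2⟩) := by
  induction n with
  | zero =>
    rw [show (p 1 : ℚ) / p 0 = ((2 : ℤ) : ℚ) by norm_num [p, q], of_s_of_int]
    rfl
  | succ n ih =>
    have := of_s_intCast_add_inv (2 : ℤ) (one_lt_p_succ_div_p n)
    rw [Int.cast_ofNat, ← p_succ_succ_div_p_succ, floor_p_succ_div_p, ih] at this
    rw [this, List.replicate_succ, Stream'.Seq.ofList_cons, Int.cast_ofNat]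

theorem of_q_div_p_s (n : ℕ) :
    (GenContFract.of ((q n : ℚ) / p n)).s = .ofList (List.replicate n ⟨1, 2⟩) := by
  cases n with
  | zero =>
    rw [show (q 0 : ℚ) / p 0 = ((1 : ℤ) : ℚ) by norm_num [p, q], of_s_of_int]
    rfl
  | succ n =>
    have := of_s_intCast_add_inv (1 : ℤ) (one_lt_p_succ_div_p n)
    rw [Int.cast_one, ← q_succ_div_p_succ, floor_p_succ_div_p, of_p_succ_div_p_s] at this
    rw [this, List.replicate_succ, Stream'.Seq.ofList_cons, Int.cast_ofNat]

theorem floor_q_div_p (n : ℕ) : ⌊(q n : ℚ) / p n⌋ = 1 := by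
  cases n with
  | zero => norm_num [p, q]
  | succ n =>
    rw [q_succ_div_p_succ]
    exact_mod_cast Int.floor_intCast_add_inv 1 (one_lt_p_succ_div_p n)

/-- The continued fraction expansion of `q n / p n` is `[1; 2, 2, ..., 2]` with exactly
`n` partial denominators. -/
theorem contFrac_of_ratio (n : ℕ) :
    (GenContFract.of ((q n : ℚ) / (p n))).h = 1 ∧
    (∀ k, k < n → (GenContFract.of ((q n : ℚ) / (p n))).partDens.get? k = some 2) ∧
    (∀ k, n ≤ k → (GenContFract.of ((q n : ℚ) / (p n))).partDens.get? k = none) := by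
  have hpartDens (k : ℕ) :
      (GenContFract.of ((q n : ℚ) / p n)).partDens.get? k = (List.replicate n (2 : ℚ))[k]? := by
    simp [partDens, of_q_div_p_s, Stream'.Seq.ofList_get?, List.getElem?_replicate]
  refine ⟨by rw [of_h_eq_floor, floor_q_div_p]; rfl, fun k hk => ?_, fun k hk => ?_⟩
  · rw [hpartDens, List.getElem?_replicate_of_lt (by simpa using hk)]
  · rw [hpartDens, List.getElem?_eq_none (by simpa using hk)]
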